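/- With the notation of the AND subprotocol: for all reals α, β, γ, δ > 0 with α + β + γ + δ = 1, the external information cost I_ext(ε) = H(P(ε)) − (α·H(R₀₀) + β·H(R₀₁) + γ·H(R₁₀) + δ·H(R₁₁)) satisfies lim_{ε→0⁺} I_ext(ε)/ε² = 128·(2αδ + β(1−β) + γ(1−γ))/ln 2. -/

import Mathlib

open Filter

/-- Entropy (base 2) of a six-entry nonnegative vector, with `0 * log₂ 0 = 0`
(automatic since `Real.logb 2 0 = 0`). -/
noncomputable def H6 (v : Fin 6 → ℝ) : ℝ := -∑ i, v i * Real.logb 2 (v i)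

/-- `p₊ = (1/2 + 4ε)²`. -/
noncomputable def pPlus (ε : ℝ) : ℝ := (1 / 2 + 4 * ε) ^ 2

/-- `p₋ = (1/2 − 4ε)²`. -/
noncomputable def pMinus (ε : ℝ) : ℝ := (1 / 2 - 4 * ε) ^ 2

/-- `q = (1/2 + 4ε)(1/2 − 4ε)`. -/
noncomputable def qMix (ε : ℝ) : ℝ := (1 / 2 + 4 * ε) * (1 / 2 - 4 * ε)

/-- Transcript distribution `P(ε) = (m₁₁, m₀₀, m₁₀/2, m₁₀/2, m₀₁/2, m₀₁/2)` of the
AND subprotocol on input distribution `(α, β, γ, δ)`, where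
`m₀₀ = α·p₊ + δ·p₋ + (β+γ)·q`, `m₀₁ = β·p₊ + γ·p₋ + (α+δ)·q`,
`m₁₀ = γ·p₊ + β·p₋ + (α+δ)·q`, `m₁₁ = δ·p₊ + α·p₋ + (β+γ)·q`. -/
noncomputable def Pvec (α β γ δ ε : ℝ) : Fin 6 → ℝ :=
  ![δ * pPlus ε + α * pMinus ε + (β + γ) * qMix ε,
    α * pPlus ε + δ * pMinus ε + (β + γ) * qMix ε,
    (γ * pPlus ε + β * pMinus ε + (α + δ) * qMix ε) / 2,
    (γ * pPlus ε + β * pMinus ε + (α + δ) * qMix ε) / 2,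
    (β * pPlus ε + γ * pMinus ε + (α + δ) * qMix ε) / 2,
    (β * pPlus ε + γ * pMinus ε + (α + δ) * qMix ε) / 2]

/-- Conditional transcript distribution given `XY = 11`. -/
noncomputable def R11 (ε : ℝ) : Fin 6 → ℝ :=
  ![pPlus ε, pMinus ε, qMix ε / 2, qMix ε / 2, qMix ε / 2, qMix ε / 2]

/-- Conditional transcript distribution given `XY = 00`. -/
noncomputable def R00 (ε : ℝ) : Fin 6 → ℝ :=
  ![pMinus ε, pPlus ε, qMix ε / 2, qMix ε / 2, qMix ε / 2, qMix ε / 2]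

/-- Conditional transcript distribution given `XY = 01`. -/
noncomputable def R01 (ε : ℝ) : Fin 6 → ℝ :=
  ![qMix ε, qMix ε, pMinus ε / 2, pMinus ε / 2, pPlus ε / 2, pPlus ε / 2]

/-- Conditional transcript distribution given `XY = 10`. -/
noncomputable def R10 (ε : ℝ) : Fin 6 → ℝ :=
  ![qMix ε, qMix ε, pPlus ε / 2, pPlus ε / 2, pMinus ε / 2, pMinus ε / 2]

/-- External information cost of the AND subprotocol:
`I_ext(ε) = H(P(ε)) − (α·H(R₀₀) + β·H(R₀₁) + γ·H(R₁₀) + δ·H(R₁₁))`. -/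
noncomputable def Iext (α β γ δ ε : ℝ) : ℝ :=
  H6 (Pvec α β γ δ ε) -
    (α * H6 (R00 ε) + β * H6 (R01 ε) + γ * H6 (R10 ε) + δ * H6 (R11 ε))

/-!
With `klFun x = x log x + 1 - x`, every `c ≠ 0` gives
`x log x = x log c + (x - c) + c · klFun (x / c)`. In the mutual information
`∑ⱼ wⱼ ∑ᵢ Rⱼᵢ log Rⱼᵢ - ∑ᵢ Pᵢ log Pᵢ` of a mixture `P = ∑ⱼ wⱼ Rⱼ` the affine part cancels,
leaving `∑ᵢ cᵢ (∑ⱼ wⱼ klFun (Rⱼᵢ / cᵢ) - klFun (Pᵢ / cᵢ))`. For a family `Rⱼ(ε)` with common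
value `c` at `ε = 0` and derivatives `uⱼ`, centring at `c` and using `klFun x ~ (x - 1)² / 2`
as `x → 1` shows that the information over `ε²` tends to `∑ᵢ Var_w(u·ᵢ) / (2 cᵢ)`. For the AND
transcript this is `128 (2αδ + β(1 - β) + γ(1 - γ))` nats.
-/

open Real Topology InformationTheory

lemma mul_log_eq_klFun {c : ℝ} (hc : c ≠ 0) (x : ℝ) :
    x * log x = x * log c + (x - c) + c * klFun (x / c) := by
  rcases eq_or_ne x 0 with rfl | hx
  · simp [klFun_zero]
  · rw [klFun_apply, log_div hx hc]
    field_simp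
    ring

lemma tendsto_klFun_div_sq : Tendsto (fun x => klFun x / (x - 1) ^ 2) (𝓝[≠] 1) (𝓝 (1 / 2)) := by
  have hlog : Tendsto (fun x => log x / (2 * (x - 1))) (𝓝[≠] 1) (𝓝 (1 / 2)) := by
    have := (hasDerivAt_iff_tendsto_slope.mp (hasDerivAt_log one_ne_zero)).div_const 2
    refine (this.congr' ?_).trans (by norm_num)
    filter_upwards with x
    rw [slope_def_field, log_one, sub_zero, div_div, mul_comm]
  have hsq (x : ℝ) : HasDerivAt (fun x => (x - 1) ^ 2) (2 * (x - 1)) x := by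
    simpa using ((hasDerivAt_id x).sub_const 1).fun_pow 2
  refine HasDerivAt.lhopital_zero_nhdsNE (f' := log) ?_ (.of_forall hsq) ?_ ?_ ?_ hlog
  · filter_upwards [nhdsWithin_le_nhds (eventually_ne_nhds one_ne_zero)] with x hx
    exact hasDerivAt_klFun hx
  · filter_upwards [self_mem_nhdsWithin] with x hx
    exact mul_ne_zero two_ne_zero (sub_ne_zero.mpr hx)
  · simpa [klFun_one] using continuous_klFun.continuousAt.tendsto.mono_left
      (nhdsWithin_le_nhds (s := {1}ᶜ) (a := (1 : ℝ)))
  · exact tendsto_nhdsWithin_of_tendsto_nhds (by simpa using (hsq 1).continuousAt.tendsto)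

lemma HasDerivAt.tendsto_klFun_comp_div_sq {f : ℝ → ℝ} {a : ℝ} (hf : HasDerivAt f a 0)
    (hf0 : f 0 = 1) : Tendsto (fun ε => klFun (f ε) / ε ^ 2) (𝓝[≠] 0) (𝓝 (a ^ 2 / 2)) := by
  set g := Function.update (fun x => klFun x / (x - 1) ^ 2) 1 (1 / 2)
  have hg : Tendsto g (𝓝 1) (𝓝 (1 / 2)) := by
    simpa [g] using (continuousAt_update_same.mpr tendsto_klFun_div_sq).tendsto
  have hklFun (x : ℝ) : klFun x = g x * (x - 1) ^ 2 := by
    rcases eq_or_ne x 1 with rfl | hx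
    · simp [klFun_one]
    · simp [g, hx, sub_ne_zero.mpr hx]
  have hf1 : Tendsto f (𝓝[≠] 0) (𝓝 1) :=
    hf0 ▸ hf.continuousAt.tendsto.mono_left nhdsWithin_le_nhds
  have hslope : Tendsto (fun ε => (f ε - 1) / ε) (𝓝[≠] 0) (𝓝 a) := by
    refine (hasDerivAt_iff_tendsto_slope.mp hf).congr fun ε => ?_
    rw [slope_def_field, hf0, sub_zero]
  refine (((hg.comp hf1).mul (hslope.pow 2)).congr fun ε => ?_).trans
    (by rw [one_div_mul_eq_div])
  rw [Function.comp_apply, hklFun, div_pow, mul_div_assoc]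

section MutualInfo

variable {κ ι : Type*} [Fintype κ] [Fintype ι]

lemma sum_mul_mul_log_sub_mul_log_sum (w x : κ → ℝ) (hw : ∑ j, w j = 1) {c : ℝ} (hc : c ≠ 0) :
    ∑ j, w j * (x j * log (x j)) - (∑ j, w j * x j) * log (∑ j, w j * x j) =
      c * (∑ j, w j * klFun (x j / c) - klFun ((∑ j, w j * x j) / c)) := by
  have hmix : ∑ j, w j * (x j * log c + (x j - c) + c * klFun (x j / c)) =
      (∑ j, w j * x j) * log c + (∑ j, w j * x j - c) + c * ∑ j, w j * klFun (x j / c) := by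
    calc _ = ∑ j, (w j * x j * log c + (w j * x j - c * w j) + c * (w j * klFun (x j / c))) :=
          Finset.sum_congr rfl fun _ _ => by ring
      _ = _ := by
        rw [Finset.sum_add_distrib, Finset.sum_add_distrib, Finset.sum_sub_distrib,
          ← Finset.sum_mul, ← Finset.mul_sum, ← Finset.mul_sum, hw, mul_one]
  simp_rw [mul_log_eq_klFun hc, hmix]
  ring

noncomputable def mutualInfo (w : κ → ℝ) (R : κ → ι → ℝ) : ℝ :=
  ∑ j, w j * ∑ i, R j i * log (R j i) - ∑ i, (∑ j, w j * R j i) * log (∑ j, w j * R j i)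

lemma mutualInfo_eq_sum_klFun (w : κ → ℝ) (hw : ∑ j, w j = 1) (R : κ → ι → ℝ) {c : ι → ℝ}
    (hc : ∀ i, c i ≠ 0) :
    mutualInfo w R =
      ∑ i, c i * (∑ j, w j * klFun (R j i / c i) - klFun ((∑ j, w j * R j i) / c i)) := by
  rw [mutualInfo, ← Finset.sum_congr rfl fun i _ => sum_mul_mul_log_sub_mul_log_sum w _ hw (hc i),
    Finset.sum_sub_distrib]
  simp_rw [Finset.mul_sum]
  rw [Finset.sum_comm]

theorem tendsto_mutualInfo_div_sq (w : κ → ℝ) (hw : ∑ j, w j = 1) {R : ℝ → κ → ι → ℝ}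
    {c : ι → ℝ} {u : κ → ι → ℝ} (hc : ∀ i, c i ≠ 0) (hR0 : ∀ j i, R 0 j i = c i)
    (hR : ∀ j i, HasDerivAt (fun ε => R ε j i) (u j i) 0) :
    Tendsto (fun ε => mutualInfo w (R ε) / ε ^ 2) (𝓝[≠] 0)
      (𝓝 (∑ i, (∑ j, w j * u j i ^ 2 - (∑ j, w j * u j i) ^ 2) / (2 * c i))) := by
  simp_rw [mutualInfo_eq_sum_klFun w hw _ hc, Finset.sum_div]
  refine tendsto_finsetSum _ fun i _ => ?_
  have hcond (j : κ) := ((hR j i).div_const (c i)).tendsto_klFun_comp_div_sq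
    (by rw [hR0, div_self (hc i)])
  have hmix : Tendsto (fun ε => klFun ((∑ j, w j * R ε j i) / c i) / ε ^ 2) (𝓝[≠] 0)
      (𝓝 (((∑ j, w j * u j i) / c i) ^ 2 / 2)) :=
    ((HasDerivAt.fun_sum fun j _ => (hR j i).const_mul (w j)).div_const
      (c i)).tendsto_klFun_comp_div_sq (by simp [hR0, ← Finset.sum_mul, hw, hc i])
  convert ((tendsto_finsetSum Finset.univ fun j _ => (hcond j).const_mul (w j)).sub
    hmix).const_mul (c i) using 1
  · funext ε
    simp only [mul_sub, Finset.mul_sum, mul_div_assoc, sub_div, Finset.sum_div]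
  · simp only [div_pow, ← mul_div_assoc, ← Finset.sum_div]
    field_simp

end MutualInfo

lemma H6_eq_neg_sum_mul_log_div (v : Fin 6 → ℝ) : H6 v = -(∑ i, v i * log (v i)) / log 2 := by
  simp [H6, logb, Finset.sum_div, mul_div_assoc, neg_div]

lemma hasDerivAt_pPlus : HasDerivAt pPlus 4 0 := by
  have h := (((hasDerivAt_id (0 : ℝ)).const_mul 4).const_add (1 / 2)).fun_pow 2
  norm_num at h
  exact h

lemma hasDerivAt_pMinus : HasDerivAt pMinus (-4) 0 := by
  have h := (((hasDerivAt_id (0 : ℝ)).const_mul 4).const_sub (1 / 2)).fun_pow 2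
  norm_num at h
  exact h

lemma hasDerivAt_qMix : HasDerivAt qMix 0 0 := by
  have h := (((hasDerivAt_id (0 : ℝ)).const_mul 4).const_add (1 / 2)).fun_mul
    (((hasDerivAt_id (0 : ℝ)).const_mul 4).const_sub (1 / 2))
  norm_num at h
  exact h

noncomputable def andCondDist (ε : ℝ) : Fin 4 → Fin 6 → ℝ := ![R00 ε, R01 ε, R10 ε, R11 ε]

noncomputable def andCondDistAtZero : Fin 6 → ℝ := ![1 / 4, 1 / 4, 1 / 8, 1 / 8, 1 / 8, 1 / 8]

def andCondDistDeriv : Fin 4 → Fin 6 → ℝ :=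
  ![![-4, 4, 0, 0, 0, 0], ![0, 0, -2, -2, 2, 2], ![0, 0, 2, 2, -2, -2], ![4, -4, 0, 0, 0, 0]]

lemma andCondDist_zero (j : Fin 4) (i : Fin 6) : andCondDist 0 j i = andCondDistAtZero i := by
  fin_cases j <;> fin_cases i <;>
    norm_num [andCondDist, andCondDistAtZero, R00, R01, R10, R11, pPlus, pMinus, qMix]

lemma hasDerivAt_andCondDist (j : Fin 4) (i : Fin 6) :
    HasDerivAt (fun ε => andCondDist ε j i) (andCondDistDeriv j i) 0 := by
  fin_cases j <;> fin_cases i <;>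
    simp only [andCondDist, andCondDistDeriv, R00, R01, R10, R11, Fin.zero_eta, Fin.mk_one,
      Fin.isValue, Fin.reduceFinMk, Matrix.cons_val', Matrix.cons_val, Matrix.cons_val_zero,
      Matrix.cons_val_one, Matrix.cons_val_fin_one] <;>
    first
    | exact hasDerivAt_pPlus | exact hasDerivAt_pMinus | exact hasDerivAt_qMix
    | exact (hasDerivAt_pPlus.div_const 2).congr_deriv (by norm_num)
    | exact (hasDerivAt_pMinus.div_const 2).congr_deriv (by norm_num)
    | exact (hasDerivAt_qMix.div_const 2).congr_deriv (by norm_num)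

lemma Pvec_apply (α β γ δ ε : ℝ) (i : Fin 6) :
    Pvec α β γ δ ε i = ∑ j, ![α, β, γ, δ] j * andCondDist ε j i := by
  fin_cases i <;> simp [Pvec, andCondDist, R00, R01, R10, R11, Fin.sum_univ_four] <;> ring

lemma Iext_eq_mutualInfo (α β γ δ ε : ℝ) :
    Iext α β γ δ ε = mutualInfo ![α, β, γ, δ] (andCondDist ε) / log 2 := by
  simp only [Iext, mutualInfo, H6_eq_neg_sum_mul_log_div, Pvec_apply, Fin.sum_univ_four,
    andCondDist, Fin.isValue, Matrix.cons_val_zero, Matrix.cons_val_one, Matrix.cons_val',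
    Matrix.cons_val, Matrix.cons_val_fin_one]
  ring

lemma sum_variance_andCondDistDeriv {α β γ δ : ℝ} (hsum : α + β + γ + δ = 1) :
    ∑ i, (∑ j, ![α, β, γ, δ] j * andCondDistDeriv j i ^ 2 -
        (∑ j, ![α, β, γ, δ] j * andCondDistDeriv j i) ^ 2) / (2 * andCondDistAtZero i) =
      128 * (2 * α * δ + β * (1 - β) + γ * (1 - γ)) := by
  simp only [Fin.sum_univ_four, Fin.sum_univ_six, andCondDistDeriv, andCondDistAtZero, Fin.isValue,
    Matrix.cons_val_zero, Matrix.cons_val_one, Matrix.cons_val', Matrix.cons_val,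
    Matrix.cons_val_fin_one]
  linear_combination (64 * (β + γ - α - δ)) * hsum

theorem stmt_13_general (α β γ δ : ℝ) (hsum : α + β + γ + δ = 1) :
    Tendsto (fun ε : ℝ => Iext α β γ δ ε / ε ^ 2) (nhdsWithin 0 (Set.Ioi 0))
      (nhds (128 * (2 * α * δ + β * (1 - β) + γ * (1 - γ)) / Real.log 2)) := by
  have hw : ∑ j, ![α, β, γ, δ] j = 1 := by simpa [Fin.sum_univ_four] using hsum
  have hc (i : Fin 6) : andCondDistAtZero i ≠ 0 := by fin_cases i <;> norm_num [andCondDistAtZero]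
  have h := (tendsto_mutualInfo_div_sq _ hw hc andCondDist_zero
    hasDerivAt_andCondDist).div_const (log 2)
  rw [sum_variance_andCondDistDeriv hsum] at h
  refine (h.mono_left (nhdsWithin_mono _ fun ε hε => ne_of_gt hε)).congr fun ε => ?_
  rw [Iext_eq_mutualInfo, div_right_comm]

theorem stmt_13 (α β γ δ : ℝ) (hα : 0 < α) (hβ : 0 < β) (hγ : 0 < γ) (hδ : 0 < δ)
    (hsum : α + β + γ + δ = 1) :
    Tendsto (fun ε : ℝ => Iext α β γ δ ε / ε ^ 2) (nhdsWithin 0 (Set.Ioi 0))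
      (nhds (128 * (2 * α * δ + β * (1 - β) + γ * (1 - γ)) / Real.log 2)) :=
  stmt_13_general α β γ δ hsum
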